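/- arXiv:1704.00858 — 4 statements merged into one kernel-verified Lean document; each statement's English description precedes it below -/
import Mathlib

section
/- Let T be a tilting object in a hereditary abelian category H. Then the pair (T(T), F(T)), where T(T) = {X : Ext^1(T,X) = 0} and F(T) = {Y : Hom(T,Y) = 0}, is a torsion pair in H. -/
/-!
For `Y` arbitrary, choose finitely many `b_i : T ⟶ Y` spanning `Hom(T, Y)` and let `tY` be the
image of `(b_i) : Tⁿ ⟶ Y`. Since `Ext²(T, -) = 0`, the functor `Ext¹(T, -)` is right exact, so
`Ext¹(T, tY) = 0` follows from `Ext¹(T, Tⁿ) = 0`. This vanishing lets every `T ⟶ Y / tY` lift to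
`T ⟶ Y`, which factors through `Tⁿ ⟶ tY` by the choice of the `b_i`; hence `Hom(T, Y / tY) = 0`.
Orthogonality is the same right exactness: the image of `X ⟶ Y` with `X` torsion and `Y`
torsion-free has both `Hom(T, -)` and `Ext¹(T, -)` zero, so it vanishes because `T` is tilting.
-/

open CategoryTheory Limits

universe w v u

namespace SplitTStructuresPaper

variable {C : Type u} [Category.{v} C] [Abelian C]

/-- A torsion pair in an abelian category: `Hom(T, F) = 0` and every object admits a
short exact sequence with torsion subobject in `T` and torsion-free quotient in `F`. -/
def IsTorsionPair (T F : Set C) : Prop :=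
  (∀ X ∈ T, ∀ Y ∈ F, ∀ f : X ⟶ Y, f = 0) ∧
  ∀ Y : C, ∃ S : ShortComplex C, S.ShortExact ∧ S.X₁ ∈ T ∧ S.X₃ ∈ F ∧ Nonempty (S.X₂ ≅ Y)

lemma _root_.CategoryTheory.ShortComplex.shortExact_kernelSequence {A B : C} (p : A ⟶ B)
    [Epi p] : (ShortComplex.kernelSequence p).ShortExact :=
  { exact := ShortComplex.kernelSequence_exact p
    epi_g := ‹Epi p› }

lemma _root_.CategoryTheory.ShortComplex.shortExact_cokernelSequence {A B : C} (i : A ⟶ B)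
    [Mono i] : (ShortComplex.cokernelSequence i).ShortExact :=
  { exact := ShortComplex.cokernelSequence_exact i
    mono_f := ‹Mono i› }

section Ext

universe w'

open Abelian (Ext)

variable [HasExt.{w'} C]

lemma _root_.CategoryTheory.ShortComplex.ShortExact.exists_lift_of_subsingleton_ext
    {S : ShortComplex C} (hS : S.ShortExact) {X : C} (h : Subsingleton (Ext X S.X₁ 1))
    (g : X ⟶ S.X₃) :
    ∃ u : X ⟶ S.X₂, u ≫ S.g = g := by
  obtain ⟨x, hx⟩ := Ext.covariant_sequence_exact₃ X hS (Ext.mk₀ g) rfl (Subsingleton.elim _ _)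
  obtain ⟨u, rfl⟩ := (Ext.mk₀_bijective X S.X₂).2 x
  exact ⟨u, (Ext.mk₀_bijective X S.X₃).1 (by rwa [Ext.mk₀_comp_mk₀] at hx)⟩

lemma _root_.CategoryTheory.ShortComplex.ShortExact.subsingleton_ext_one_X₃
    {S : ShortComplex C} (hS : S.ShortExact) {X : C} (h₂ : Subsingleton (Ext X S.X₂ 1))
    (h₁ : Subsingleton (Ext X S.X₁ 2)) : Subsingleton (Ext X S.X₃ 1) := by
  refine subsingleton_of_forall_eq 0 fun x => ?_
  obtain ⟨y, rfl⟩ := Ext.covariant_sequence_exact₃ X hS x rfl (h₁.elim _ _)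
  rw [h₂.elim y 0, Ext.zero_comp]

lemma subsingleton_ext_one_of_epi {X A B : C} (p : A ⟶ B) [Epi p]
    (hA : Subsingleton (Ext X A 1)) (hK : Subsingleton (Ext X (kernel p) 2)) :
    Subsingleton (Ext X B 1) :=
  (ShortComplex.shortExact_kernelSequence p).subsingleton_ext_one_X₃ hA hK

lemma subsingleton_ext_biproduct {ι : Type*} [Fintype ι] (X : C) (Y : ι → C) [HasBiproduct Y]
    (n : ℕ) (h : ∀ i, Subsingleton (Ext X (Y i) n)) : Subsingleton (Ext X (⨁ Y) n) :=
  (Ext.addEquivBiproduct X (biproduct.isBilimit Y) n).toEquiv.subsingleton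

lemma hom_cokernel_image_eq_zero {T P Y : C} (e : P ⟶ Y)
    (he : ∀ g : T ⟶ Y, ∃ u, u ≫ e = g) (hI : Subsingleton (Ext T (image e) 1))
    (f : T ⟶ cokernel (image.ι e)) : f = 0 := by
  obtain ⟨g, rfl⟩ :=
    (ShortComplex.shortExact_cokernelSequence (image.ι e)).exists_lift_of_subsingleton_ext hI f
  obtain ⟨u, rfl⟩ := he g
  change (u ≫ e) ≫ cokernel.π (image.ι e) = 0
  rw [Category.assoc, ← image.fac_assoc e, cokernel.condition, comp_zero, comp_zero]

end Ext

attribute [local instance] Abelian.hasFiniteBiproducts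

lemma exists_biproduct_hom_factoring_all (k : Type w) [Semiring k] [Linear k C] (T Y : C)
    [Module.Finite k (T ⟶ Y)] :
    ∃ (n : ℕ) (e : (⨁ fun _ : Fin n => T) ⟶ Y), ∀ g : T ⟶ Y, ∃ u, u ≫ e = g := by
  obtain ⟨n, b, hb⟩ := Module.Finite.exists_fin (R := k) (M := T ⟶ Y)
  refine ⟨n, biproduct.desc b, fun g => ?_⟩
  obtain ⟨c, rfl⟩ := (Submodule.mem_span_range_iff_exists_fun k).1 (hb ▸ Submodule.mem_top (x := g))
  exact ⟨biproduct.lift fun i => c i • 𝟙 T, by simp [biproduct.lift_desc]⟩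

theorem tilting_induces_torsionPair_general
    (k : Type w) [Field k] [Linear k C] [HasExt.{v} C]
    (hHered : ∀ X Y : C, Subsingleton (Abelian.Ext X Y 2))
    (hHomFin : ∀ X Y : C, FiniteDimensional k (X ⟶ Y))
    (T : C)
    (hRigid : Subsingleton (Abelian.Ext T T 1))
    (hGen : ∀ X : C, (∀ f : T ⟶ X, f = 0) → Subsingleton (Abelian.Ext T X 1) → IsZero X) :
    IsTorsionPair {X : C | Subsingleton (Abelian.Ext T X 1)} {Y : C | ∀ f : T ⟶ Y, f = 0} := by
  constructor
  · intro X hX Y hY f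
    have hI : IsZero (image f) :=
      hGen _ (fun g => (cancel_mono (image.ι f)).1 (by simp [hY (g ≫ image.ι f)]))
        (subsingleton_ext_one_of_epi (factorThruImage f) hX (hHered _ _))
    rw [← image.fac f, hI.eq_of_tgt (factorThruImage f) 0, zero_comp]
  · intro Y
    have := hHomFin T Y
    obtain ⟨n, e, he⟩ := exists_biproduct_hom_factoring_all k T Y
    have hI : Subsingleton (Abelian.Ext T (image e) 1) :=
      subsingleton_ext_one_of_epi (factorThruImage e)
        (subsingleton_ext_biproduct T _ 1 fun _ => hRigid) (hHered _ _)
    exact ⟨ShortComplex.cokernelSequence (image.ι e), ShortComplex.shortExact_cokernelSequence _,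
      hI, hom_cokernel_image_eq_zero e he hI, ⟨Iso.refl Y⟩⟩

/-- A tilting object `T` in a hereditary abelian category `H`
(i.e. `Ext¹(T,T) = 0`, and `Hom(T,X) = 0 = Ext¹(T,X)` imply `X = 0`) induces the torsion
pair `(T(T), F(T))` with `T(T) = {X : Ext¹(T,X) = 0}` and `F(T) = {Y : Hom(T,Y) = 0}`. -/
theorem tilting_induces_torsionPair
    (k : Type w) [Field k] [IsAlgClosed k] [Linear k C] [HasExt.{v} C]
    (hHered : ∀ X Y : C, Subsingleton (Abelian.Ext X Y 2))
    (hHomFin : ∀ X Y : C, FiniteDimensional k (X ⟶ Y))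
    (T : C)
    (hRigid : Subsingleton (Abelian.Ext T T 1))
    (hGen : ∀ X : C, (∀ f : T ⟶ X, f = 0) → Subsingleton (Abelian.Ext T X 1) → IsZero X) :
    IsTorsionPair {X : C | Subsingleton (Abelian.Ext T X 1)} {Y : C | ∀ f : T ⟶ Y, f = 0} :=
  tilting_induces_torsionPair_general k hHered hHomFin T hRigid hGen

end SplitTStructuresPaper
end

section
/- Let K be a Krull-Schmidt triangulated category and (U, U^⊥[1]) a split t-structure in K. Then there is no semipath in K from an indecomposable object of U to an indecomposable object of U^⊥. -/
open CategoryTheory Limits Pretriangulated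

universe v u

namespace SplitTStructuresPaper

variable (D : Type u) [Category.{v} D] [HasZeroObject D] [Preadditive D]
  [HasShift D ℤ] [∀ n : ℤ, (shiftFunctor D n).Additive] [Pretriangulated D]

variable {D}

/-- Right orthogonal of a class of objects. -/
def rOrth (T : Set D) : Set D := {Y | ∀ X ∈ T, ∀ f : X ⟶ Y, f = 0}

/-- An object of a preadditive category is indecomposable if it is nonzero and its only
idempotent endomorphisms are `0` and the identity. -/
def Indec (X : D) : Prop :=
  ¬ IsZero X ∧ ∀ e : X ⟶ X, e ≫ e = e → e = 0 ∨ e = 𝟙 X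

/-- `U` is the aisle of a t-structure `(U, U^⊥[1])`: `U` is closed under `[1]` and every
object fits into a distinguished triangle `X ⟶ Y ⟶ Z ⟶ X[1]` with `X ∈ U`, `Z ∈ U^⊥`
(Keller–Vossieck). -/
def IsAisle (U : Set D) : Prop :=
  (∀ X ∈ U, X⟦(1 : ℤ)⟧ ∈ U) ∧
  ∀ Y : D, ∃ (X Z : D) (f : X ⟶ Y) (g : Y ⟶ Z) (h : Z ⟶ X⟦(1 : ℤ)⟧),
    Triangle.mk f g h ∈ (distTriang D) ∧ X ∈ U ∧ Z ∈ rOrth U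

/-- A split t-structure: every indecomposable object lies in `U` or in `U^⊥`. -/
def IsSplitTStructure (U : Set D) : Prop :=
  IsAisle U ∧ ∀ X : D, Indec X → X ∈ U ∨ X ∈ rOrth U

variable (D) in
/-- A Krull–Schmidt category: every object is a finite biproduct of indecomposables
(with local endomorphism rings). -/
def IsKrullSchmidt [HasFiniteBiproducts D] : Prop :=
  ∀ X : D, ∃ (n : ℕ) (f : Fin n → D), (∀ i, Indec (f i)) ∧ Nonempty (X ≅ ⨁ f)

/-- One step of a semipath between indecomposables: a nonzero morphism, or a jump
`X_{i+1} = X_i[1]`. -/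
def SemipathStep (X Y : D) : Prop :=
  Indec X ∧ Indec Y ∧ ((∃ f : X ⟶ Y, f ≠ 0) ∨ Nonempty (Y ≅ X⟦(1 : ℤ)⟧))

/-- There is a semipath from `X` to `Y`: a sequence `(X = X₀, X₁, …, Xₙ = Y)` of
indecomposables where each step is a nonzero morphism or a shift jump. -/
def HasSemipath (X Y : D) : Prop :=
  Indec X ∧ Indec Y ∧ Relation.ReflTransGen SemipathStep X Y

/-- Let `K` be a Krull–Schmidt triangulated category and `(U, U^⊥[1])` a
split t-structure.  Then there is no semipath from an indecomposable object of `U` to an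
indecomposable object of `U^⊥`. -/
theorem no_semipath_from_aisle_to_coaisle
    [HasFiniteBiproducts D] (hKS : IsKrullSchmidt D)
    (U : Set D) (hU : IsSplitTStructure U)
    (X Y : D) (hX : Indec X) (hY : Indec Y) (hXU : X ∈ U) (hYU : Y ∈ rOrth U) :
    ¬ HasSemipath X Y := by
  rintro ⟨-, -, hpath⟩
  -- show every indecomposable vertex along the path lies in U
  have hYinU : Y ∈ U := by
    clear hY hYU
    induction hpath with
    | refl => exact hXU
    | tail h step ih =>
      rename_i b c
      obtain ⟨hb, hc, hstep⟩ := step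
      have hbU : b ∈ U := ih
      rcases hU.2 c hc with hcU | hcO
      · exact hcU
      · exfalso
        rcases hstep with ⟨f, hf⟩ | he
        · exact hf (hcO b hbU f)
        · obtain ⟨e⟩ := he
          -- c ≅ b⟦1⟧ and b⟦1⟧ ∈ U, so inv map is zero, so 𝟙 c = 0
          have hb1 : b⟦(1 : ℤ)⟧ ∈ U := hU.1.1 b hbU
          have : e.inv = 0 := hcO _ hb1 e.inv
          have hid : 𝟙 c = 0 := by
            rw [← e.hom_inv_id, this, Limits.comp_zero]
          exact hc.1 ((Limits.IsZero.iff_id_eq_zero _).mpr hid)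
  -- Y ∈ U and Y ∈ rOrth U forces Y = 0
  have hid : 𝟙 Y = 0 := hYU Y hYinU (𝟙 Y)
  exact hY.1 ((Limits.IsZero.iff_id_eq_zero _).mpr hid)

end SplitTStructuresPaper
end

section
/- Let Q be a quiver and (U, U^⊥[1]) a split t-structure in D^b(mod kQ). If E_0 is an indecomposable Ext-projective object of U lying in a transjective component Γ ≅ ZQ, and E_0 → X is an arrow of Γ, then X or τX is Ext-projective in U; dually if Y → E_0 is an arrow, then Y or τ^{-1}Y is Ext-projective in U. Consequently the indecomposable Ext-projectives of U in Γ form a presection (hence a section) of Γ. -/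
open CategoryTheory Limits Pretriangulated

universe v u

namespace SplitTStructuresPaper

variable (D : Type u) [Category.{v} D] [HasZeroObject D] [Preadditive D]
  [HasShift D ℤ] [∀ n : ℤ, (shiftFunctor D n).Additive] [Pretriangulated D]

variable {D}

/-- `X` is an Ext-projective object of `U`: `X ∈ U` and `Hom(X, Y[1]) = 0` for all
`Y ∈ U`. -/
def ExtProj (U : Set D) (X : D) : Prop :=
  X ∈ U ∧ ∀ Y ∈ U, ∀ f : X ⟶ Y⟦(1 : ℤ)⟧, f = 0

/-- Let `Q` be a quiver and `(U, U^⊥[1])` a split t-structure in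
`D^b(mod kQ)`, modelled by the Krull–Schmidt triangulated category `D` with
Auslander–Reiten translation `τ = e.functor` (Serre duality: an indecomposable `X ∈ U` is
Ext-projective in `U` iff `τX ∈ U^⊥`), and `Γ ≅ ℤQ` a transjective component of the AR
quiver with arrow relation `Arr` satisfying the mesh relations.  If `E₀ ∈ Γ` is an
indecomposable Ext-projective of `U` and `E₀ → X` is an arrow, then `X` or `τX` is
Ext-projective in `U`; dually for arrows `Y → E₀`, `Y` or `τ⁻¹Y` is Ext-projective.
Consequently the indecomposable Ext-projectives of `U` in `Γ` form a presection (hence a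
section) of `Γ`. -/
theorem extProjectives_form_presection
    (Q : Type) [Quiver Q]
    [HasFiniteBiproducts D] (hKS : IsKrullSchmidt D)
    (U : Set D) (hU : IsSplitTStructure U)
    (hUiso : ∀ X Y : D, X ∈ U → Nonempty (X ≅ Y) → Y ∈ U)
    (e : D ≌ D)  -- the Auslander–Reiten translation τ
    (hSerre : ∀ X : D, Indec X → X ∈ U → (ExtProj U X ↔ e.functor.obj X ∈ rOrth U))
    (Γ : Set D) (Arr : D → D → Prop)
    (hΓind : ∀ X ∈ Γ, Indec X)
    (hΓτ : ∀ X ∈ Γ, e.functor.obj X ∈ Γ ∧ e.inverse.obj X ∈ Γ)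
    (hArrΓ : ∀ X Y : D, Arr X Y → (X ∈ Γ ↔ Y ∈ Γ))
    (hArrHom : ∀ X Y : D, Arr X Y → ∃ f : X ⟶ Y, f ≠ 0)
    (hmesh : ∀ X Y : D, Arr X Y → Arr (e.functor.obj Y) X)
    (hmesh' : ∀ X Y : D, Arr X Y → Arr Y (e.inverse.obj X))
    (E₀ : D) (hE₀ : E₀ ∈ Γ) (hE₀proj : ExtProj U E₀) :
    (∀ X : D, Arr E₀ X → ExtProj U X ∨ ExtProj U (e.functor.obj X)) ∧
    (∀ Y : D, Arr Y E₀ → ExtProj U Y ∨ ExtProj U (e.inverse.obj Y)) ∧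
    -- the Ext-projectives in `Γ` form a presection
    (∀ X Y : D, Arr X Y →
      ((Y ∈ Γ ∧ ExtProj U Y) → (X ∈ Γ ∧ ExtProj U X) ∨
        (e.inverse.obj X ∈ Γ ∧ ExtProj U (e.inverse.obj X))) ∧
      ((X ∈ Γ ∧ ExtProj U X) → (Y ∈ Γ ∧ ExtProj U Y) ∨
        (e.functor.obj Y ∈ Γ ∧ ExtProj U (e.functor.obj Y)))) := by
  obtain ⟨hAisle, hsplit⟩ := hU
  -- `rOrth U` is closed under isomorphism
  have hOrthIso : ∀ X Y : D, X ∈ rOrth U → (X ≅ Y) → Y ∈ rOrth U := by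
    intro X Y hX i Z hZ f
    have h0 : f ≫ i.inv = 0 := hX Z hZ (f ≫ i.inv)
    calc f = (f ≫ i.inv) ≫ i.hom := by simp
    _ = 0 := by rw [h0]; simp
  have key₁ : ∀ E : D, E ∈ Γ → ExtProj U E → ∀ X : D, Arr E X →
      ExtProj U X ∨ ExtProj U (e.functor.obj X) := by
    intro E hEΓ hEproj X hArr
    have hXΓ : X ∈ Γ := (hArrΓ E X hArr).mp hEΓ
    have hXind := hΓind X hXΓ
    have hτE : e.functor.obj E ∈ rOrth U := (hSerre E (hΓind E hEΓ) hEproj.1).mp hEproj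
    have hXU : X ∈ U := by
      rcases hsplit X hXind with h | h
      · exact h
      · obtain ⟨f, hf⟩ := hArrHom E X hArr
        exact absurd (h E hEproj.1 f) hf
    have hτXΓ : e.functor.obj X ∈ Γ := (hΓτ X hXΓ).1
    rcases hsplit (e.functor.obj X) (hΓind _ hτXΓ) with hτXU | hτXO
    · -- `τX ∈ U`: then `τ²X ∈ U^⊥`, so `τX` is Ext-projective
      right
      have hττXΓ : e.functor.obj (e.functor.obj X) ∈ Γ := (hΓτ _ hτXΓ).1
      have hArr2 : Arr (e.functor.obj X) E := hmesh E X hArr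
      have hArr3 : Arr (e.functor.obj E) (e.functor.obj X) := hmesh _ _ hArr2
      have hArr4 : Arr (e.functor.obj (e.functor.obj X)) (e.functor.obj E) :=
        hmesh _ _ hArr3
      have hττO : e.functor.obj (e.functor.obj X) ∈ rOrth U := by
        rcases hsplit _ (hΓind _ hττXΓ) with h | h
        · obtain ⟨f, hf⟩ := hArrHom _ _ hArr4
          exact absurd (hτE _ h f) hf
        · exact h
      exact (hSerre _ (hΓind _ hτXΓ) hτXU).mpr hττO
    · left
      exact (hSerre X hXind hXU).mpr hτXO
  have key₂ : ∀ E : D, E ∈ Γ → ExtProj U E → ∀ Y : D, Arr Y E →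
      ExtProj U Y ∨ ExtProj U (e.inverse.obj Y) := by
    intro E hEΓ hEproj Y hArr
    have hYΓ : Y ∈ Γ := (hArrΓ Y E hArr).mpr hEΓ
    have hYind := hΓind Y hYΓ
    have hτE : e.functor.obj E ∈ rOrth U := (hSerre E (hΓind E hEΓ) hEproj.1).mp hEproj
    rcases hsplit Y hYind with hYU | hYO
    · left
      have hτYΓ : e.functor.obj Y ∈ Γ := (hΓτ Y hYΓ).1
      have hτYO : e.functor.obj Y ∈ rOrth U := by
        rcases hsplit _ (hΓind _ hτYΓ) with h | h
        · have hArr2 : Arr (e.functor.obj E) Y := hmesh Y E hArr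
          have hArr3 : Arr (e.functor.obj Y) (e.functor.obj E) := hmesh _ _ hArr2
          obtain ⟨f, hf⟩ := hArrHom _ _ hArr3
          exact absurd (hτE _ h f) hf
        · exact h
      exact (hSerre Y hYind hYU).mpr hτYO
    · right
      have hτY'Γ : e.inverse.obj Y ∈ Γ := (hΓτ Y hYΓ).2
      have hτY'ind := hΓind _ hτY'Γ
      have hτY'U : e.inverse.obj Y ∈ U := by
        rcases hsplit _ hτY'ind with h | h
        · exact h
        · have hArr2 : Arr E (e.inverse.obj Y) := hmesh' Y E hArr
          obtain ⟨f, hf⟩ := hArrHom _ _ hArr2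
          exact absurd (h E hEproj.1 f) hf
      have hiso : e.functor.obj (e.inverse.obj Y) ∈ rOrth U :=
        hOrthIso Y _ hYO (e.counitIso.app Y).symm
      exact (hSerre _ hτY'ind hτY'U).mpr hiso
  refine ⟨key₁ E₀ hE₀ hE₀proj, key₂ E₀ hE₀ hE₀proj, ?_⟩
  intro X Y hArr
  constructor
  · rintro ⟨hYΓ, hYproj⟩
    rcases key₂ Y hYΓ hYproj X hArr with h | h
    · exact Or.inl ⟨(hArrΓ X Y hArr).mpr hYΓ, h⟩
    · exact Or.inr ⟨(hΓτ X ((hArrΓ X Y hArr).mpr hYΓ)).2, h⟩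
  · rintro ⟨hXΓ, hXproj⟩
    rcases key₁ X hXΓ hXproj Y hArr with h | h
    · exact Or.inl ⟨(hArrΓ X Y hArr).mp hXΓ, h⟩
    · exact Or.inr ⟨(hΓτ Y ((hArrΓ X Y hArr).mp hXΓ)).1, h⟩

end SplitTStructuresPaper
end

section
/- Let Q be a finite quiver, (U, U^⊥[1]) a split t-structure in D^b(mod kQ), and E the direct sum of a complete set of representatives of isomorphism classes of indecomposable Ext-projective objects of U. If E is nonzero, then E belongs to the heart U ∩ U^⊥[1]; in particular U is not a triangulated subcategory. -/
open CategoryTheory Limits Pretriangulated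

universe v u

namespace SplitTStructuresPaper

section Preadditive

variable {C C' : Type*} [Category C] [Preadditive C] [Category C'] [Preadditive C']

lemma Indec.map (F : C ⥤ C') [F.Full] [F.Faithful] [F.PreservesZeroMorphisms] {X : C}
    (hX : Indec X) : Indec (F.obj X) := by
  refine ⟨fun hFX => hX.1 ?_, fun e he => ?_⟩
  · rw [IsZero.iff_id_eq_zero] at hFX ⊢
    exact F.map_injective (by rw [F.map_id, F.map_zero, hFX])
  · obtain ⟨e', rfl⟩ := F.map_surjective e
    have he' : e' ≫ e' = e' := F.map_injective (by rw [F.map_comp, he])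
    rcases hX.2 e' he' with rfl | rfl
    · exact Or.inl (F.map_zero X X)
    · exact Or.inr (F.map_id X)

lemma mem_rOrth_of_iso {U : Set C} {Y Y' : C} (e : Y ≅ Y') (hY : Y ∈ rOrth U) :
    Y' ∈ rOrth U := fun X hX f =>
  (cancel_mono e.inv).1 (by rw [hY X hX (f ≫ e.inv), zero_comp])

lemma biproduct_mem_rOrth {U : Set C} {J : Type*} (f : J → C) [HasBiproduct f]
    (hf : ∀ j, f j ∈ rOrth U) : (⨁ f) ∈ rOrth U := fun X hX g =>
  biproduct.hom_ext _ _ fun j => by rw [hf j X hX (g ≫ biproduct.π f j), zero_comp]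

/-- The isomorphism `X⟦-1⟧⟦1⟧ ≅ X` is a nonzero map which Ext-projectivity kills. -/
lemma ExtProj.shift_neg_one_not_mem [HasShift C ℤ] {U : Set C} {X : C} (hX : ExtProj U X)
    (hX0 : ¬ IsZero X) : X⟦(-1 : ℤ)⟧ ∉ U := fun hXU => by
  let ε := (shiftFunctorCompIsoId C (-1 : ℤ) 1 (by norm_num)).app X
  exact hX0 ((IsZero.iff_id_eq_zero X).2
    (by simpa [hX.2 _ hXU ε.inv] using ε.inv_hom_id.symm))

end Preadditive

variable {D : Type u} [Category.{v} D] [HasZeroObject D] [Preadditive D]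
  [HasShift D ℤ] [∀ n : ℤ, (shiftFunctor D n).Additive] [Pretriangulated D]

lemma IsAisle.mem_of_forall_hom_rOrth_eq_zero {U : Set D} (hU : IsAisle U)
    (hUiso : ∀ X Y : D, X ∈ U → Nonempty (X ≅ Y) → Y ∈ U)
    {Y : D} (hY : ∀ Z ∈ rOrth U, ∀ g : Y ⟶ Z, g = 0) : Y ∈ U := by
  obtain ⟨X, Z, f, g, h, hT, hX, hZ⟩ := hU.2 Y
  -- `g = 0` makes `𝟙 Z` factor through `X⟦1⟧ ∈ U`, hence vanish.
  obtain ⟨r, hr⟩ := Triangle.yoneda_exact₃ _ hT (𝟙 Z)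
    (by dsimp [Triangle.mk]; rw [hY Z hZ g, zero_comp]; rfl)
  have hZ0 : IsZero Z := by
    rw [IsZero.iff_id_eq_zero, hr]
    exact (hZ _ (hU.1 X hX) r).symm ▸ comp_zero
  have : IsIso f := (Triangle.isZero₃_iff_isIso₁ _ hT).1 hZ0
  exact hUiso X Y hX ⟨asIso f⟩

lemma IsAisle.biproduct_mem {U : Set D} (hU : IsAisle U)
    (hUiso : ∀ X Y : D, X ∈ U → Nonempty (X ≅ Y) → Y ∈ U)
    {J : Type*} (f : J → D) [HasBiproduct f] (hf : ∀ j, f j ∈ U) : (⨁ f) ∈ U :=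
  hU.mem_of_forall_hom_rOrth_eq_zero hUiso fun Z hZ g =>
    biproduct.hom_ext' _ _ fun j => by rw [comp_zero]; exact hZ _ (hf j) _

lemma ExtProj.shift_neg_one_mem_rOrth {U : Set D} (hU : IsSplitTStructure U)
    {X : D} (hX : ExtProj U X) (hXi : Indec X) : X⟦(-1 : ℤ)⟧ ∈ rOrth U :=
  (hU.2 _ (hXi.map _)).resolve_left (hX.shift_neg_one_not_mem hXi.1)

theorem extProjective_sum_in_heart_general
    [HasFiniteBiproducts D]
    (U : Set D) (hU : IsSplitTStructure U)
    (hUiso : ∀ X Y : D, X ∈ U → Nonempty (X ≅ Y) → Y ∈ U)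
    (n : ℕ) (Erep : Fin n → D)
    (hrep : ∀ i, Indec (Erep i) ∧ ExtProj U (Erep i))
    (hne : 0 < n) :
    ((⨁ Erep) ∈ U ∧ (⨁ Erep)⟦(-1 : ℤ)⟧ ∈ rOrth U) ∧
      ¬ (∀ X ∈ U, X⟦(-1 : ℤ)⟧ ∈ U) := by
  have hE : (⨁ Erep) ∈ U := IsAisle.biproduct_mem hU.1 hUiso Erep fun i => (hrep i).2.1
  have hE' : (⨁ Erep)⟦(-1 : ℤ)⟧ ∈ rOrth U :=
    mem_rOrth_of_iso ((shiftFunctor D (-1 : ℤ)).mapBiproduct Erep).symm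
      (biproduct_mem_rOrth _ fun i => (hrep i).2.shift_neg_one_mem_rOrth hU (hrep i).1)
  refine ⟨⟨hE, hE'⟩, fun hclosed => ?_⟩
  obtain ⟨hindec, hproj⟩ := hrep ⟨0, hne⟩
  exact hproj.shift_neg_one_not_mem hindec.1 (hclosed _ hproj.1)

/-- Let `Q` be a finite quiver, `(U, U^⊥[1])` a split t-structure in
`D^b(mod kQ)` (modelled by the Krull–Schmidt triangulated category `D`), and
`E = E₁ ⊕ ⋯ ⊕ Eₙ` the direct sum of a complete set of representatives of isomorphism
classes of indecomposable Ext-projective objects of `U`.  If `E` is nonzero then `E`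
belongs to the heart `U ∩ U^⊥[1]`; in particular `U` is not a triangulated
subcategory. -/
theorem extProjective_sum_in_heart
    (Q : Type) [Quiver Q] [Fintype Q]
    [HasFiniteBiproducts D] (hKS : IsKrullSchmidt D)
    (U : Set D) (hU : IsSplitTStructure U)
    (hUiso : ∀ X Y : D, X ∈ U → Nonempty (X ≅ Y) → Y ∈ U)
    (n : ℕ) (Erep : Fin n → D)
    (hrep : ∀ i, Indec (Erep i) ∧ ExtProj U (Erep i))
    (hirred : ∀ i j, Nonempty (Erep i ≅ Erep j) → i = j)
    (hcomplete : ∀ X : D, Indec X → ExtProj U X → ∃ i, Nonempty (X ≅ Erep i))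
    (hne : 0 < n) :
    ((⨁ Erep) ∈ U ∧ (⨁ Erep)⟦(-1 : ℤ)⟧ ∈ rOrth U) ∧
      ¬ (∀ X ∈ U, X⟦(-1 : ℤ)⟧ ∈ U) :=
  extProjective_sum_in_heart_general U hU hUiso n Erep hrep hne

end SplitTStructuresPaper
end
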